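/- arXiv:2310.08895 — 5 statements merged into one kernel-verified Lean document; each statement's English description precedes it below -/
import Mathlib

section
/- Let n ≥ 2 be a natural number, r > 0, c ≥ 0, T ∈ (0,1), and set w = 1 + c − T > 0 and t = (n−1)r / (n² w). Define for x ∈ ℝ with t + x ≥ 0 the function u(x) = r(t+x)/(nt+x) − w(t+x). Then u(0) = r/n², u'(0) = 0, u'(x) > 0 for −t ≤ x < 0, and u'(x) < 0 for x > 0; in particular u attains its unique maximum at x = 0. -/
/-!
Write `k = n t` for the total stake. The choice of `t` is exactly the balance condition
`w k² = r (k - t)`, under which `u'(x) = r (k - t) / (k + x)² - w = w (k² - (k + x)²) / (k + x)²`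
and `u 0 - u x = w x² / (k + x)`; both are then signed by inspection on `k + x > 0`.
-/

noncomputable def stakeUtility (r w t k x : ℝ) : ℝ :=
  r * (t + x) / (k + x) - w * (t + x)

namespace stakeUtility

variable {r w t k x : ℝ}

theorem hasDerivAt (hx : k + x ≠ 0) :
    HasDerivAt (stakeUtility r w t k) (r * (k - t) / (k + x) ^ 2 - w) x := by
  have hnum : HasDerivAt (fun y : ℝ => r * (t + y)) r x := by
    simpa using ((hasDerivAt_id x).const_add t).const_mul r
  have hden : HasDerivAt (fun y : ℝ => k + y) 1 x := by
    simpa using (hasDerivAt_id x).const_add k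
  have hcost : HasDerivAt (fun y : ℝ => w * (t + y)) w x := by
    simpa using ((hasDerivAt_id x).const_add t).const_mul w
  exact ((hnum.div hden hx).sub hcost).congr_deriv (by ring)

variable (hbal : w * k ^ 2 = r * (k - t))
include hbal

theorem deriv_eq_of_balance (hx : k + x ≠ 0) :
    deriv (stakeUtility r w t k) x = w * (k ^ 2 - (k + x) ^ 2) / (k + x) ^ 2 := by
  rw [(hasDerivAt hx).deriv, ← hbal]
  field_simp

theorem zero_sub_eq_of_balance (hk : k ≠ 0) (hx : k + x ≠ 0) :
    stakeUtility r w t k 0 - stakeUtility r w t k x = w * x ^ 2 / (k + x) := by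
  simp only [stakeUtility, add_zero]
  field_simp
  linear_combination x * hbal

theorem deriv_zero_of_balance (hk : k ≠ 0) : deriv (stakeUtility r w t k) 0 = 0 := by
  rw [deriv_eq_of_balance hbal (by simpa using hk)]
  simp

theorem deriv_pos_of_balance (hw : 0 < w) (hkx : 0 < k + x) (hx : x < 0) :
    0 < deriv (stakeUtility r w t k) x := by
  rw [deriv_eq_of_balance hbal hkx.ne']
  have : (k + x) ^ 2 < k ^ 2 := by nlinarith
  have : 0 < k ^ 2 - (k + x) ^ 2 := by linarith
  positivity

theorem deriv_neg_of_balance (hw : 0 < w) (hk : 0 < k) (hx : 0 < x) :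
    deriv (stakeUtility r w t k) x < 0 := by
  rw [deriv_eq_of_balance hbal (by linarith)]
  have : k ^ 2 < (k + x) ^ 2 := by nlinarith
  exact div_neg_of_neg_of_pos (mul_neg_of_pos_of_neg hw (by linarith)) (by positivity)

theorem apply_lt_apply_zero_of_balance (hw : 0 < w) (hkx : 0 < k + x) (hx : x ≠ 0) (hk : k ≠ 0) :
    stakeUtility r w t k x < stakeUtility r w t k 0 := by
  have := zero_sub_eq_of_balance hbal hk hkx.ne'
  have : 0 < w * x ^ 2 / (k + x) := by positivity
  linarith

end stakeUtility

open stakeUtility in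
theorem stmt5 (n : ℕ) (hn : 2 ≤ n) (r c T : ℝ)
    (hr : 0 < r) (hc : 0 ≤ c) (hT : T ∈ Set.Ioo (0:ℝ) 1) :
    let w : ℝ := 1 + c - T
    let t : ℝ := ((n : ℝ) - 1) * r / ((n : ℝ) ^ 2 * w)
    let u : ℝ → ℝ := fun x => r * (t + x) / ((n : ℝ) * t + x) - w * (t + x)
    0 < w ∧
    u 0 = r / (n : ℝ) ^ 2 ∧
    deriv u 0 = 0 ∧
    (∀ x : ℝ, -t ≤ x → x < 0 → 0 < deriv u x) ∧
    (∀ x : ℝ, 0 < x → deriv u x < 0) ∧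
    (∀ x : ℝ, -t ≤ x → x ≠ 0 → u x < u 0) := by
  intro w t u
  rw [show u = stakeUtility r w t (n * t) from rfl]
  have hw : 0 < w := by grind
  have hn1 : (0 : ℝ) < n - 1 := by
    have : (2 : ℝ) ≤ n := by exact_mod_cast hn
    linarith
  have ht : 0 < t := by positivity
  have htk : t < n * t := by nlinarith
  have hbal : w * (n * t) ^ 2 = r * (n * t - t) := by
    simp only [t]
    field_simp
  have hkx : ∀ x, -t ≤ x → 0 < n * t + x := fun x hx => by linarith
  refine ⟨hw, ?_, deriv_zero_of_balance hbal (by positivity),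
    fun x hx hx0 => deriv_pos_of_balance hbal hw (hkx x hx) hx0,
    fun x hx => deriv_neg_of_balance hbal hw (by positivity) hx,
    fun x hx hx0 => apply_lt_apply_zero_of_balance hbal hw (hkx x hx) hx0 (by positivity)⟩
  simp only [stakeUtility, t]
  field_simp
  ring
end

section
/- Let r > 0, w > 0, and let T₁, T₂, t₂ > 0 with T₁, T₂ ∈ (0,1). Consider u(t₁) = r T₁ t₁ / (T₁ t₁ + T₂ t₂) − w t₁ for t₁ ≥ 0. If r T₁ / (T₂ t₂) > w, then u is maximized at t₁* = √(r T₂ t₂ / (w T₁)) − (T₂/T₁) t₂ > 0, and the maximal value equals (√(T₂ t₂ w / T₁) − √r)². -/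
/-!
Writing `c = T₂ t₂ / T₁` for the opponent's stake measured in user 1's units, the utility is
`r t / (t + c) - w t`, and with `k = √(r c / w)` one has the exact identity
`(√(c w) - √r)² - u t = w (t + c - k)² / (t + c)`.
Its right-hand side is nonnegative for `t ≥ 0` and vanishes at `t = k - c`, which is positive
precisely when `w c < r`.
-/

open Real

noncomputable def shareUtility (r w c t : ℝ) : ℝ := r * t / (t + c) - w * t

theorem shareUtility_div (r w a b t : ℝ) (ha : a ≠ 0) :
    shareUtility r w (b / a) t = r * a * t / (a * t + b) - w * t := by
  have hden : t + b / a = (a * t + b) / a := by field_simp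
  rw [shareUtility, hden, div_div_eq_mul_div]
  ring

theorem sqrt_mul_sqrt_eq_mul_sqrt_div {r w c : ℝ} (hc : 0 ≤ c) (hw : 0 < w) :
    √(c * w) * √r = w * √(r * c / w) := by
  have hw' : w * √(r * c / w) = √(w ^ 2 * (r * c / w)) := by
    rw [sqrt_mul (sq_nonneg w), sqrt_sq hw.le]
  rw [← sqrt_mul (by positivity), hw']
  congr 1
  field_simp

theorem sq_sub_shareUtility {r w c t : ℝ} (hr : 0 ≤ r) (hw : 0 < w) (hc : 0 ≤ c)
    (ht : t + c ≠ 0) :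
    (√(c * w) - √r) ^ 2 - shareUtility r w c t = w * (t + c - √(r * c / w)) ^ 2 / (t + c) := by
  have hs : √(c * w) ^ 2 = c * w := sq_sqrt (by positivity)
  have hρ : √r ^ 2 = r := sq_sqrt hr
  have hk : w * √(r * c / w) ^ 2 = r * c := by
    rw [sq_sqrt (by positivity)]
    field_simp
  have hcross := sqrt_mul_sqrt_eq_mul_sqrt_div (r := r) hc hw
  have hfrac : r * t / (t + c) * (t + c) = r * t := div_mul_cancel₀ _ ht
  rw [shareUtility, eq_div_iff ht]
  linear_combination (t + c) * hs + (t + c) * hρ - 2 * (t + c) * hcross - hk - hfrac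

theorem shareUtility_le {r w c t : ℝ} (hr : 0 ≤ r) (hw : 0 < w) (hc : 0 ≤ c)
    (ht : 0 < t + c) : shareUtility r w c t ≤ (√(c * w) - √r) ^ 2 := by
  have hgap := sq_sub_shareUtility hr hw hc ht.ne'
  have hgap_nonneg : 0 ≤ w * (t + c - √(r * c / w)) ^ 2 / (t + c) := by positivity
  linarith

theorem shareUtility_sqrt_sub {r w c : ℝ} (hr : 0 < r) (hw : 0 < w) (hc : 0 < c) :
    shareUtility r w c (√(r * c / w) - c) = (√(c * w) - √r) ^ 2 := by
  have hk : 0 < √(r * c / w) := sqrt_pos.mpr (by positivity)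
  have hgap := sq_sub_shareUtility hr.le hw hc.le (t := √(r * c / w) - c) (by simp [hk.ne'])
  rw [sub_add_cancel, sub_self, zero_pow two_ne_zero, mul_zero, zero_div, sub_eq_zero] at hgap
  exact hgap.symm

theorem lt_sqrt_div_of_mul_lt {r w c : ℝ} (hw : 0 < w) (hc : 0 < c) (hwc : w * c < r) :
    c < √(r * c / w) := by
  rw [lt_sqrt hc.le, lt_div_iff₀ hw]
  nlinarith

theorem stmt7 (r w T₁ T₂ t₂ : ℝ)
    (hr : 0 < r) (hw : 0 < w)
    (hT₁ : T₁ ∈ Set.Ioo (0:ℝ) 1) (hT₂ : T₂ ∈ Set.Ioo (0:ℝ) 1) (ht₂ : 0 < t₂)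
    (h : r * T₁ / (T₂ * t₂) > w) :
    let u : ℝ → ℝ := fun t₁ => r * T₁ * t₁ / (T₁ * t₁ + T₂ * t₂) - w * t₁
    let tstar : ℝ := Real.sqrt (r * T₂ * t₂ / (w * T₁)) - (T₂ / T₁) * t₂
    0 < tstar ∧
    u tstar = (Real.sqrt (T₂ * t₂ * w / T₁) - Real.sqrt r) ^ 2 ∧
    (∀ t₁ : ℝ, 0 ≤ t₁ → u t₁ ≤ u tstar) := by
  intro u tstar
  have hT₁0 := hT₁.1
  have hb : 0 < T₂ * t₂ := mul_pos hT₂.1 ht₂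
  have hc : 0 < T₂ * t₂ / T₁ := div_pos hb hT₁0
  have hwc : w * (T₂ * t₂ / T₁) < r := by
    rw [gt_iff_lt, lt_div_iff₀ hb] at h
    rw [mul_div_assoc', div_lt_iff₀ hT₁0]
    linarith
  have hu : ∀ t, u t = shareUtility r w (T₂ * t₂ / T₁) t :=
    fun t => (shareUtility_div r w T₁ _ t hT₁0.ne').symm
  have htstar : tstar = √(r * (T₂ * t₂ / T₁) / w) - T₂ * t₂ / T₁ := by
    simp only [tstar, div_mul_eq_mul_div]
    congr 2
    ring
  have hV : √(T₂ * t₂ * w / T₁) = √(T₂ * t₂ / T₁ * w) := by rw [div_mul_eq_mul_div]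
  have hvalue : u tstar = (√(T₂ * t₂ * w / T₁) - √r) ^ 2 := by
    rw [hu, htstar, shareUtility_sqrt_sub hr hw hc, hV]
  refine ⟨?_, hvalue, fun t ht => ?_⟩
  · rw [htstar, sub_pos]
    exact lt_sqrt_div_of_mul_lt hw hc hwc
  · rw [hvalue, hu, hV]
    exact shareUtility_le hr.le hw hc.le (add_pos_of_nonneg_of_pos ht hc)
end

section
/- Let n ≥ 2, r > 0, and T ∈ (0,1) with w = 1 − T > 0 (commission-free case). Let t = (n−1)r/(n²w). In the profile where all n users delegate t tokens to the same validator with common trust T, each user's utility is r/n². Moreover, for any deviation of a single user to token amount t + x (x ≥ −t, x ≠ 0), keeping the same validator, the deviator's utility r(t+x)/(nt+x) − w(t+x) is strictly less than r/n². -/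
theorem stmt12 (n : ℕ) (hn : 2 ≤ n) (r T : ℝ)
    (hr : 0 < r) (hT : T ∈ Set.Ioo (0:ℝ) 1) :
    let w : ℝ := 1 - T
    let t : ℝ := ((n : ℝ) - 1) * r / ((n : ℝ) ^ 2 * w)
    r * t / (((n : ℝ) - 1) * t + t) - w * t = r / (n : ℝ) ^ 2 ∧
    (∀ x : ℝ, -t ≤ x → x ≠ 0 →
      r * (t + x) / (((n : ℝ) - 1) * t + (t + x)) - w * (t + x) < r / (n : ℝ) ^ 2) := by
  intro w t
  obtain ⟨hT0, hT1⟩ := hT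
  have hw : (0:ℝ) < w := by simp only [w]; linarith
  have hn' : (2:ℝ) ≤ (n:ℝ) := by exact_mod_cast hn
  have hnpos : (0:ℝ) < (n:ℝ) := by linarith
  have hn1 : (0:ℝ) < (n:ℝ) - 1 := by linarith
  have ht : 0 < t := by
    simp only [t]
    positivity
  have hne : ((n:ℝ) ^ 2 * w) ≠ 0 := by positivity
  have htdef : t * ((n:ℝ) ^ 2 * w) = ((n:ℝ) - 1) * r := by
    simp only [t]
    field_simp
  constructor
  · have hd : ((n:ℝ) - 1) * t + t = (n:ℝ) * t := by ring
    rw [hd, div_sub' (by positivity), div_eq_div_iff (by positivity) (by positivity)]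
    linear_combination (-((n:ℝ) * t)) * htdef
  · intro x hx hx0
    have hD : 0 < ((n:ℝ) - 1) * t + (t + x) := by nlinarith
    rw [div_sub' (ne_of_gt hD), div_lt_div_iff₀ hD (by positivity)]
    have hx2 : 0 < x ^ 2 := by positivity
    have key : (r * (t + x) - (((n:ℝ) - 1) * t + (t + x)) * (w * (t + x))) * (n:ℝ) ^ 2
        = r * (((n:ℝ) - 1) * t + (t + x)) - (n:ℝ) ^ 2 * (w * x ^ 2) := by
      linear_combination (-((n:ℝ) * t + ((n:ℝ) + 1) * x)) * htdef
    rw [key]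
    nlinarith [mul_pos (mul_pos (by positivity : (0:ℝ) < (n:ℝ)^2) hw) hx2]
end

section
/- Let q, q̄ ∈ (0,1) with q > q̄ and p, p' ∈ (0,1) with p ≥ p'. For n ≥ 2 define T^{(n−1)} = p q^{n−1}/(p q^{n−1} + (1−p) q̄^{n−1}) and T' = p' q/(p' q + (1−p') q̄). Then T^{(n−1)} > T' whenever n ≥ 3, and T^{(n−1)} ≥ T' with equality only if p = p' and n = 2. -/
theorem stmt13 (n : ℕ) (hn : 2 ≤ n) (q qb p p' : ℝ)
    (hq : q ∈ Set.Ioo (0:ℝ) 1) (hqb : qb ∈ Set.Ioo (0:ℝ) 1) (hqqb : q > qb)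
    (hp : p ∈ Set.Ioo (0:ℝ) 1) (hp' : p' ∈ Set.Ioo (0:ℝ) 1) (hpp : p ≥ p') :
    let Tn : ℝ := p * q ^ (n - 1) / (p * q ^ (n - 1) + (1 - p) * qb ^ (n - 1))
    let T' : ℝ := p' * q / (p' * q + (1 - p') * qb)
    (3 ≤ n → Tn > T') ∧ Tn ≥ T' ∧ (Tn = T' → p = p' ∧ n = 2) := by
  obtain ⟨hq0, hq1⟩ := hq
  obtain ⟨hqb0, hqb1⟩ := hqb
  obtain ⟨hp0, hp1⟩ := hp
  obtain ⟨hp'0, hp'1⟩ := hp'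
  have h1p : (0:ℝ) < 1 - p := by linarith
  have h1p' : (0:ℝ) < 1 - p' := by linarith
  intro Tn T'
  set k := n - 2 with hk
  have hn1 : n - 1 = k + 1 := by omega
  have hqk : (0:ℝ) < q ^ k := pow_pos hq0 k
  have hqbk : (0:ℝ) < qb ^ k := pow_pos hqb0 k
  have hqkge : qb ^ k ≤ q ^ k := pow_le_pow_left₀ hqb0.le hqqb.le k
  have hDn : 0 < p * q ^ (n - 1) + (1 - p) * qb ^ (n - 1) :=
    add_pos (mul_pos hp0 (pow_pos hq0 _)) (mul_pos h1p (pow_pos hqb0 _))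
  have hD' : 0 < p' * q + (1 - p') * qb :=
    add_pos (mul_pos hp'0 hq0) (mul_pos h1p' hqb0)
  have hkey : p' * (1 - p) * qb ^ k ≤ p * (1 - p') * q ^ k := by
    nlinarith [mul_nonneg (mul_pos hp'0 h1p).le (sub_nonneg.mpr hqkge),
      mul_nonneg (sub_nonneg.mpr hpp) hqk.le]
  have hcross : p' * q * ((1 - p) * qb ^ (n - 1)) ≤ p * q ^ (n - 1) * ((1 - p') * qb) := by
    rw [hn1]; simp only [pow_succ]
    nlinarith [mul_le_mul_of_nonneg_left hkey (mul_pos hq0 hqb0).le]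
  have hge : T' ≤ Tn := by
    show p' * q / _ ≤ _
    rw [div_le_div_iff₀ hD' hDn]
    nlinarith [hcross]
  have hstrict : ∀ _ : 3 ≤ n, T' < Tn := by
    intro h3
    have hqklt : qb ^ k < q ^ k := pow_lt_pow_left₀ hqqb hqb0.le (by omega)
    have hkey' : p' * (1 - p) * qb ^ k < p * (1 - p') * q ^ k := by
      nlinarith [mul_pos (mul_pos hp'0 h1p) (sub_pos.mpr hqklt),
        mul_nonneg (sub_nonneg.mpr hpp) hqk.le]
    show p' * q / _ < _
    rw [div_lt_div_iff₀ hD' hDn]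
    have hc' : p' * q * ((1 - p) * qb ^ (n - 1)) < p * q ^ (n - 1) * ((1 - p') * qb) := by
      rw [hn1]; simp only [pow_succ]
      nlinarith [mul_lt_mul_of_pos_left hkey' (mul_pos hq0 hqb0)]
    nlinarith [hc']
  refine ⟨hstrict, hge, ?_⟩
  intro heq
  have hn2 : n = 2 := by
    by_contra hne
    exact absurd heq.symm (ne_of_lt (hstrict (by omega)))
  have hk0 : k = 0 := by omega
  have heq' : (p * q ^ (n - 1)) * (p' * q + (1 - p') * qb)
      = (p' * q) * (p * q ^ (n - 1) + (1 - p) * qb ^ (n - 1)) :=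
    (div_eq_div_iff hDn.ne' hD'.ne').mp heq
  rw [hn1, hk0, pow_one] at heq'
  have h2 : (p - p') * (q * qb) = 0 := by linear_combination heq'
  rcases mul_eq_zero.mp h2 with h | h
  · exact ⟨by linarith, hn2⟩
  · nlinarith [mul_pos hq0 hqb0]
end

section
/- Let n ≥ 2, r > 0, c ≥ 0, p, q, q̄ ∈ (0,1) with q > q̄, and T = p q^n/(p q^n + (1−p) q̄^n). Then the NE token amount t = (n−1)r/(n²(1+c−T)) satisfies t < r/(n(1+c−T)), and the total staked amount n·t = (n−1)r/(n(1+c−T)) is strictly increasing in n and converges to r/(1+c−T_∞) where T_∞ = 1 (i.e., total stake tends to r/c if c > 0). -/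
/-!
With `k = (1 - p) / p` and `x = qb / q ∈ [0, 1)` the trust is `T m = (1 + k x ^ m)⁻¹`: it stays
below `1`, is nondecreasing in `m` and tends to `1`. The total stake `m * t m` equals
`(m - 1) / m * (r / (1 + c - T m))`, a product of the strictly increasing `(m - 1) / m ≥ 0` and
the nondecreasing positive `r / (1 + c - T m)`, so it increases strictly and tends to `r / c`.
-/

open Filter Topology

noncomputable def trust (p q qb : ℝ) (m : ℕ) : ℝ :=
  p * q ^ m / (p * q ^ m + (1 - p) * qb ^ m)

section Trust

variable {p q qb : ℝ}

theorem trust_eq_inv (hp : p ≠ 0) (hq : q ≠ 0) (m : ℕ) :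
    trust p q qb m = (1 + (1 - p) / p * (qb / q) ^ m)⁻¹ := by
  rw [trust, div_pow]
  field_simp

theorem trust_lt_one (hp0 : 0 < p) (hp1 : p < 1) (hq : 0 < q) (hqb : 0 < qb) (m : ℕ) :
    trust p q qb m < 1 := by
  rw [trust_eq_inv hp0.ne' hq.ne']
  apply inv_lt_one_of_one_lt₀
  have : 0 < (1 - p) / p * (qb / q) ^ m := by have := sub_pos.2 hp1; positivity
  linarith

theorem trust_monotone (hp0 : 0 < p) (hp1 : p ≤ 1) (hq : 0 < q) (hqb : 0 ≤ qb) (hqbq : qb ≤ q) :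
    Monotone (trust p q qb) := by
  intro a b hab
  simp only [trust_eq_inv hp0.ne' hq.ne']
  have hk : 0 ≤ (1 - p) / p := by have := sub_nonneg.2 hp1; positivity
  have hx : 0 ≤ qb / q := by positivity
  have hx1 : qb / q ≤ 1 := (div_le_one hq).2 hqbq
  gcongr ?_⁻¹
  gcongr 1 + _ * ?_
  exact pow_le_pow_of_le_one hx hx1 hab

theorem tendsto_trust_atTop (hp : p ≠ 0) (hqb : 0 ≤ qb) (hqbq : qb < q) :
    Tendsto (trust p q qb) atTop (𝓝 1) := by
  have hq : 0 < q := hqb.trans_lt hqbq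
  have hx : Tendsto (fun m : ℕ => (qb / q) ^ m) atTop (𝓝 0) :=
    tendsto_pow_atTop_nhds_zero_of_lt_one (by positivity) ((div_lt_one hq).2 hqbq)
  have := ((hx.const_mul ((1 - p) / p)).const_add 1).inv₀ (by simp)
  simp only [mul_zero, add_zero, inv_one] at this
  rwa [funext (trust_eq_inv (qb := qb) hp hq.ne')]

end Trust

theorem mul_sub_one_mul_div_sq_mul {K : Type*} [Field K] (x r d : K) :
    x * ((x - 1) * r / (x ^ 2 * d)) = (x - 1) / x * (r / d) := by
  rcases eq_or_ne x 0 with rfl | hx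
  · simp
  · field_simp

theorem sub_one_mul_div_sq_mul_lt {x r d : ℝ} (hx : 0 < x) (hr : 0 < r) (hd : 0 < d) :
    (x - 1) * r / (x ^ 2 * d) < r / (x * d) := by
  rw [div_lt_div_iff₀ (by positivity) (by positivity)]
  nlinarith [mul_pos (mul_pos hr hd) hx]

theorem strictMonoOn_natCast_sub_one_div :
    StrictMonoOn (fun m : ℕ => ((m : ℝ) - 1) / m) {m | 1 ≤ m} := by
  intro a ha b hb hab
  have ha0 : (0 : ℝ) < a := by exact_mod_cast ha
  have hab' : (a : ℝ) < b := by exact_mod_cast hab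
  simp only [sub_div, div_self ha0.ne', div_self (ha0.trans hab').ne']
  gcongr

theorem tendsto_natCast_sub_one_div_atTop :
    Tendsto (fun m : ℕ => ((m : ℝ) - 1) / m) atTop (𝓝 1) := by
  simpa [neg_add_eq_sub] using tendsto_add_mul_div_add_mul_atTop_nhds (-1 : ℝ) 0 1 one_ne_zero

theorem StrictMonoOn.mul_monotoneOn_of_nonneg_of_pos {α : Type*} [Preorder α] {f g : α → ℝ}
    {s : Set α} (hf : StrictMonoOn f s) (hg : MonotoneOn g s) (hf0 : ∀ x ∈ s, 0 ≤ f x)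
    (hg0 : ∀ x ∈ s, 0 < g x) : StrictMonoOn (fun x => f x * g x) s :=
  fun _ ha _ hb hab =>
    mul_lt_mul_of_lt_of_le_of_nonneg_of_pos (hf ha hb hab) (hg ha hb hab.le) (hf0 _ ha) (hg0 _ hb)

theorem stmt16_general (n : ℕ) (hn : 2 ≤ n) (r c p q qb : ℝ)
    (hr : 0 < r) (hc : 0 ≤ c)
    (hp : p ∈ Set.Ioo (0:ℝ) 1) (hqb : qb ∈ Set.Ioo (0:ℝ) 1)
    (hqqb : q > qb) :
    let T : ℕ → ℝ := fun m => p * q ^ m / (p * q ^ m + (1 - p) * qb ^ m)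
    let t : ℕ → ℝ := fun m => ((m : ℝ) - 1) * r / ((m : ℝ) ^ 2 * (1 + c - T m))
    t n < r / ((n : ℝ) * (1 + c - T n)) ∧
    StrictMonoOn (fun m : ℕ => (m : ℝ) * t m) {m : ℕ | 2 ≤ m} ∧
    (0 < c → Filter.Tendsto (fun m : ℕ => (m : ℝ) * t m) Filter.atTop (nhds (r / c))) := by
  intro T t
  obtain ⟨hp0, hp1⟩ := hp
  have hqb0 := hqb.1
  have hq0 : 0 < q := hqb0.trans hqqb
  have hgap : ∀ m, 0 < 1 + c - trust p q qb m := fun m => by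
    linarith [trust_lt_one hp0 hp1 hq0 hqb0 m]
  have hstake : (fun m : ℕ => (m : ℝ) * t m) =
      fun m : ℕ => ((m : ℝ) - 1) / m * (r / (1 + c - trust p q qb m)) :=
    funext fun m => mul_sub_one_mul_div_sq_mul _ _ _
  refine ⟨sub_one_mul_div_sq_mul_lt (Nat.cast_pos.2 (by omega)) hr (hgap n), ?_, fun hc0 => ?_⟩
  · have hshare : Monotone fun m => r / (1 + c - trust p q qb m) := fun a b hab =>
      div_le_div_of_nonneg_left hr.le (hgap b) <| by
        linarith [trust_monotone hp0 hp1.le hq0 hqb0.le hqqb.le hab]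
    rw [hstake]
    refine (strictMonoOn_natCast_sub_one_div.mul_monotoneOn_of_nonneg_of_pos
      (hshare.monotoneOn _) (fun m hm => ?_) (fun m _ => div_pos hr (hgap m))).mono
      fun m (hm : 2 ≤ m) => (by omega : 1 ≤ m)
    exact div_nonneg (sub_nonneg.2 (by exact_mod_cast hm)) m.cast_nonneg
  · have hlim := (tendsto_const_nhds (x := 1 + c)).sub (tendsto_trust_atTop hp0.ne' hqb0.le hqqb)
    rw [add_sub_cancel_left] at hlim
    rw [hstake]
    simpa using tendsto_natCast_sub_one_div_atTop.mul (tendsto_const_nhds.div hlim hc0.ne')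

theorem stmt16 (n : ℕ) (hn : 2 ≤ n) (r c p q qb : ℝ)
    (hr : 0 < r) (hc : 0 ≤ c)
    (hp : p ∈ Set.Ioo (0:ℝ) 1) (hq : q ∈ Set.Ioo (0:ℝ) 1) (hqb : qb ∈ Set.Ioo (0:ℝ) 1)
    (hqqb : q > qb) :
    let T : ℕ → ℝ := fun m => p * q ^ m / (p * q ^ m + (1 - p) * qb ^ m)
    let t : ℕ → ℝ := fun m => ((m : ℝ) - 1) * r / ((m : ℝ) ^ 2 * (1 + c - T m))
    t n < r / ((n : ℝ) * (1 + c - T n)) ∧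
    StrictMonoOn (fun m : ℕ => (m : ℝ) * t m) {m : ℕ | 2 ≤ m} ∧
    (0 < c → Filter.Tendsto (fun m : ℕ => (m : ℝ) * t m) Filter.atTop (nhds (r / c))) :=
  stmt16_general n hn r c p q qb hr hc hp hqb hqqb
end
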